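/- arXiv:1604.00490 — 3 statements merged into one kernel-verified Lean document; each statement's English description precedes it below -/
import Mathlib

section
/- Let U ⊆ ℝ^n be an open set, let f be a real polynomial in n variables, let φ be a locally integrable complex-valued function on U, and let ψ : ℝ^n → ℂ be a smooth compactly supported function with support contained in U. Then the function Z(λ) := ∫_U f_+^λ(x)·φ(x)·ψ(x) dx is continuous on the closed half-plane {λ ∈ ℂ : Re λ ≥ 0}. -/
open MeasureTheory Filter Topology

/-- `f_+^λ(x)`: equals `exp(λ log f(x))` if `f(x) > 0`, and `0` otherwise. -/
noncomputable def fpow {n : ℕ} (f : (Fin n → ℝ) → ℝ) (lam : ℂ) (x : Fin n → ℝ) : ℂ :=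
  if 0 < f x then Complex.exp (lam * Real.log (f x)) else 0

/-- `f_+^λ (log f_+)^k (x)`. -/
noncomputable def fpowLog {n : ℕ} (f : (Fin n → ℝ) → ℝ) (lam : ℂ) (k : ℕ) (x : Fin n → ℝ) : ℂ :=
  if 0 < f x then Complex.exp (lam * Real.log (f x)) * (Real.log (f x)) ^ k else 0

/-- the partial derivative `∂_i` acting on functions `ℝ^n → ℂ`. -/
noncomputable def pderivOp {n : ℕ} (i : Fin n) (g : (Fin n → ℝ) → ℂ) : (Fin n → ℝ) → ℂ :=
  fun x => fderiv ℝ g x (Pi.single i 1)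

/-- the iterated partial derivative `∂^α = ∂_1^{α_1} ⋯ ∂_n^{α_n}`. -/
noncomputable def multiPderiv {n : ℕ} (α : Fin n → ℕ) (g : (Fin n → ℝ) → ℂ) :
    (Fin n → ℝ) → ℂ :=
  (List.finRange n).foldr (fun i h => (pderivOp i)^[α i] h) g

/-- evaluation at `(x, λ)` of a polynomial in `(x_1,…,x_n,s)` with complex coefficients. -/
noncomputable def polyEval {n : ℕ} (p : MvPolynomial (Fin n ⊕ Unit) ℂ) (x : Fin n → ℝ)
    (lam : ℂ) : ℂ :=
  MvPolynomial.eval (Sum.elim (fun i => ((x i : ℝ) : ℂ)) (fun _ => lam)) p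

/-- `(ᵗP(λ))ψ = Σ_{α∈A} (−1)^{|α|} ∂^α (p_α(·,λ)·ψ)`, the formal adjoint of the
differential operator `P(s) = Σ_{α∈A} p_α(x,s) ∂^α` evaluated at `s = λ`. -/
noncomputable def adjointApply {n : ℕ} (A : Finset (Fin n → ℕ))
    (p : (Fin n → ℕ) → MvPolynomial (Fin n ⊕ Unit) ℂ) (lam : ℂ)
    (ψ : (Fin n → ℝ) → ℂ) : (Fin n → ℝ) → ℂ :=
  fun x => ∑ α ∈ A, (-1 : ℂ) ^ (∑ i, α i) *
    multiPderiv α (fun y => polyEval (p α) y lam * ψ y) x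

/-- `Z(λ) = ∫_U f_+^λ φ ψ dx` is continuous on the closed right half-plane. -/
theorem statement7 {n : ℕ} (U : Set (Fin n → ℝ)) (hU : IsOpen U)
    (f : MvPolynomial (Fin n) ℝ) (φ : (Fin n → ℝ) → ℂ)
    (hφ : LocallyIntegrableOn φ U) (ψ : (Fin n → ℝ) → ℂ)
    (hψ : ContDiff ℝ (⊤ : ℕ∞) ψ) (hψc : HasCompactSupport ψ) (hψU : tsupport ψ ⊆ U) :
    ContinuousOn
      (fun lam => ∫ x in U, fpow (fun y => MvPolynomial.eval y f) lam x * φ x * ψ x)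
      {lam : ℂ | 0 ≤ lam.re} := by
  set F : (Fin n → ℝ) → ℝ := fun y => MvPolynomial.eval y f with hFdef
  have hFc : Continuous F := by
    simp only [hFdef]; continuity
  have hK : IsCompact (tsupport ψ) := hψc
  have hKmeas : MeasurableSet (tsupport ψ) := (isClosed_tsupport ψ).measurableSet
  obtain ⟨M, hM⟩ : ∃ M, ∀ x ∈ tsupport ψ, F x ≤ M := by
    rcases (hK.image hFc).bddAbove with ⟨M, hM⟩
    exact ⟨M, fun x hx => hM ⟨x, hx, rfl⟩⟩
  -- integrability of `φ ψ` on `U`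
  have hφψ : IntegrableOn (fun x => φ x * ψ x) U := by
    have h1 : IntegrableOn φ (tsupport ψ) := hφ.integrableOn_compact_subset hψU hK
    obtain ⟨B, hB⟩ : ∃ B, ∀ x, ‖ψ x‖ ≤ B := by
      rcases (hK.image hψ.continuous.norm).bddAbove with ⟨B, hB⟩
      refine ⟨max B 0, fun x => ?_⟩
      by_cases hx : x ∈ tsupport ψ
      · exact le_trans (hB ⟨x, hx, rfl⟩) (le_max_left _ _)
      · simp [image_eq_zero_of_notMem_tsupport hx]
    have h2 : IntegrableOn (fun x => ψ x * φ x) (tsupport ψ) :=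
      h1.bdd_mul (hψ.continuous.aestronglyMeasurable.restrict) (ae_of_all _ hB)
    have h2' : IntegrableOn (fun x => φ x * ψ x) (tsupport ψ) := by
      simpa [mul_comm] using h2
    have heq : (tsupport ψ).indicator (fun x => φ x * ψ x) = fun x => φ x * ψ x := by
      funext x
      by_cases hx : x ∈ tsupport ψ
      · simp [Set.indicator_of_mem hx]
      · simp [Set.indicator_of_notMem hx, image_eq_zero_of_notMem_tsupport hx]
    have h3 : Integrable ((tsupport ψ).indicator fun x => φ x * ψ x) volume :=
      (integrable_indicator_iff hKmeas).2 h2'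
    rw [heq] at h3
    exact h3.integrableOn
  intro lam₀ hlam₀
  have hb0 : (0 : ℝ) ≤ lam₀.re := hlam₀
  set C : ℝ := (max 1 M) ^ (lam₀.re + 1) with hC
  have h1M : (1 : ℝ) ≤ max 1 M := le_max_left _ _
  have hC0 : 0 ≤ C := Real.rpow_nonneg (by linarith) _
  haveI : (𝓝[{lam : ℂ | 0 ≤ lam.re}] lam₀).NeBot := nhdsWithin_neBot_of_mem hlam₀
  refine MeasureTheory.tendsto_integral_filter_of_dominated_convergence
      (fun x => C * (‖φ x‖ * ‖ψ x‖)) ?_ ?_ ?_ ?_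
  · -- measurability
    filter_upwards with lam
    have hmeas : Measurable (fun x => fpow F lam x) := by
      have heq : (fun x => fpow F lam x) =
          Set.indicator {x | 0 < F x} (fun x => Complex.exp (lam * Real.log (F x))) := by
        funext x; by_cases h : 0 < F x <;> simp [fpow, h, Set.indicator]
      rw [heq]
      exact Measurable.indicator
        (Complex.measurable_exp.comp
          (measurable_const.mul
            (Complex.measurable_ofReal.comp (Real.measurable_log.comp hFc.measurable))))
        (measurableSet_lt measurable_const hFc.measurable)
    exact (hmeas.aestronglyMeasurable.mul hφ.aestronglyMeasurable).mul
      hψ.continuous.aestronglyMeasurable.restrict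
  · -- uniform bound
    have hev : ∀ᶠ lam in 𝓝[{lam : ℂ | 0 ≤ lam.re}] lam₀,
        lam.re ≤ lam₀.re + 1 ∧ 0 ≤ lam.re := by
      have h1 : ∀ᶠ lam : ℂ in 𝓝 lam₀, lam.re ≤ lam₀.re + 1 :=
        (Complex.continuous_re.tendsto lam₀).eventually (eventually_le_nhds (by linarith))
      filter_upwards [eventually_nhdsWithin_of_eventually_nhds h1,
        eventually_mem_nhdsWithin] with lam h₁ h₂
      exact ⟨h₁, h₂⟩
    filter_upwards [hev] with lam hlam
    filter_upwards with x
    by_cases hx : x ∈ tsupport ψ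
    · have hfp : ‖fpow F lam x‖ ≤ C := by
        by_cases h : 0 < F x
        · have : ‖fpow F lam x‖ = (F x) ^ lam.re := by
            rw [fpow, if_pos h, Complex.norm_exp,
              Real.rpow_def_of_pos h]
            congr 1
            simp [Complex.mul_re, mul_comm]
          rw [this]
          calc (F x) ^ lam.re ≤ (max 1 M) ^ lam.re := by
                apply Real.rpow_le_rpow (le_of_lt h) _ hlam.2
                exact le_trans (hM x hx) (le_max_right _ _)
            _ ≤ (max 1 M) ^ (lam₀.re + 1) :=
                Real.rpow_le_rpow_of_exponent_le h1M hlam.1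
        · rw [fpow, if_neg h]; simpa using hC0
      calc ‖fpow F lam x * φ x * ψ x‖ = ‖fpow F lam x‖ * ‖φ x‖ * ‖ψ x‖ := by
            simp [norm_mul]
        _ ≤ C * (‖φ x‖ * ‖ψ x‖) := by
            rw [mul_assoc]
            exact mul_le_mul_of_nonneg_right hfp
              (mul_nonneg (norm_nonneg _) (norm_nonneg _))
    · simp [image_eq_zero_of_notMem_tsupport hx]
  · -- integrability of bound
    have : Integrable (fun x => ‖φ x * ψ x‖) (volume.restrict U) := hφψ.norm
    have h' : Integrable (fun x => ‖φ x‖ * ‖ψ x‖) (volume.restrict U) := by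
      simpa [norm_mul] using this
    exact h'.const_mul C
  · -- pointwise convergence
    filter_upwards with x
    have hcont : Continuous fun lam : ℂ => fpow F lam x * φ x * ψ x := by
      by_cases h : 0 < F x
      · simp only [fpow, if_pos h]
        exact ((Complex.continuous_exp.comp (continuous_id.mul continuous_const)).mul
          continuous_const).mul continuous_const
      · simp only [fpow, if_neg h, zero_mul]
        exact continuous_const
    exact (hcont.tendsto lam₀).mono_left nhdsWithin_le_nhds
end

section
/- The function Z : ℂ → ℂ defined by Z(λ) = ∫_0^∞ x^λ e^{−x − 1/x} dx is entire, i.e., complex differentiable at every λ ∈ ℂ. -/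
/-!
`Z(λ)` is the Mellin transform of `x ↦ e^{-x-1/x}` at `λ + 1`. This function decays faster than
every power of `x` both as `x → ∞` and as `x → 0⁺`, so its Mellin transform is holomorphic on
every vertical strip `b < Re s < a`, hence entire.
-/

open MeasureTheory Set Real Filter Asymptotics Topology

theorem differentiable_mellin_of_isBigO_rpow_forall {E : Type*} [NormedAddCommGroup E]
    [NormedSpace ℂ E] {f : ℝ → E} (hfc : LocallyIntegrableOn f (Ioi 0))
    (hf_top : ∀ a : ℝ, f =O[atTop] (· ^ (-a))) (hf_bot : ∀ b : ℝ, f =O[𝓝[>] 0] (· ^ (-b))) :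
    Differentiable ℂ (mellin f) := fun s =>
  mellin_differentiableAt_of_isBigO_rpow hfc (hf_top _) (lt_add_one s.re)
    (hf_bot _) (sub_one_lt s.re)

theorem isLittleO_exp_neg_inv_rpow_nhdsGT_zero (r : ℝ) :
    (fun x : ℝ => exp (-x⁻¹)) =o[𝓝[>] 0] (· ^ r) := by
  have h := (isLittleO_exp_neg_mul_rpow_atTop one_pos (-r)).comp_tendsto tendsto_inv_nhdsGT_zero
  refine h.congr' (Eventually.of_forall fun x => by simp) ?_
  filter_upwards [self_mem_nhdsWithin] with x (hx : 0 < x)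
  simp [inv_rpow hx.le, rpow_neg hx.le]

theorem norm_exp_neg_sub_inv_le {x : ℝ} (hx : 0 < x) :
    ‖exp (-x - 1 / x)‖ ≤ exp (-x) ⊓ exp (-x⁻¹) := by
  rw [norm_of_nonneg (exp_pos _).le, le_inf_iff, exp_le_exp, exp_le_exp, one_div]
  have : 0 < x⁻¹ := inv_pos.mpr hx
  constructor <;> linarith

theorem exp_neg_sub_inv_isBigO_atTop (a : ℝ) :
    (fun x : ℝ => exp (-x - 1 / x)) =O[atTop] (· ^ (-a)) := by
  refine IsBigO.trans ?_ (isLittleO_exp_neg_mul_rpow_atTop one_pos (-a)).isBigO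
  refine IsBigO.of_bound' ?_
  filter_upwards [eventually_gt_atTop 0] with x hx
  simpa [norm_of_nonneg (exp_pos _).le] using (norm_exp_neg_sub_inv_le hx).trans inf_le_left

theorem exp_neg_sub_inv_isBigO_nhdsGT_zero (b : ℝ) :
    (fun x : ℝ => exp (-x - 1 / x)) =O[𝓝[>] 0] (· ^ (-b)) := by
  refine IsBigO.trans ?_ (isLittleO_exp_neg_inv_rpow_nhdsGT_zero (-b)).isBigO
  refine IsBigO.of_bound' ?_
  filter_upwards [self_mem_nhdsWithin] with x (hx : 0 < x)
  simpa [norm_of_nonneg (exp_pos _).le] using (norm_exp_neg_sub_inv_le hx).trans inf_le_right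

theorem differentiable_mellin_exp_neg_sub_inv :
    Differentiable ℂ (mellin fun x : ℝ => (exp (-x - 1 / x) : ℂ)) := by
  refine differentiable_mellin_of_isBigO_rpow_forall ?_
    (fun a => Complex.isBigO_ofReal_left.mpr (exp_neg_sub_inv_isBigO_atTop a))
    (fun b => Complex.isBigO_ofReal_left.mpr (exp_neg_sub_inv_isBigO_nhdsGT_zero b))
  refine ContinuousOn.locallyIntegrableOn ?_ measurableSet_Ioi
  refine Complex.continuous_ofReal.comp_continuousOn ?_
  fun_prop (disch := exact fun x (hx : 0 < x) => hx.ne')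

/-- The local zeta function `Z(λ) = ∫_0^∞ x^λ e^{−x−1/x} dx` is entire. -/
theorem statement15 :
    Differentiable ℂ
      (fun lam : ℂ =>
        ∫ x in Set.Ioi (0 : ℝ),
          Complex.exp (lam * Real.log x) * Real.exp (-x - 1 / x)) := by
  have h_mellin : ∀ lam : ℂ, ∫ x in Ioi (0 : ℝ), Complex.exp (lam * Real.log x) *
      Real.exp (-x - 1 / x) = mellin (fun x : ℝ => (exp (-x - 1 / x) : ℂ)) (lam + 1) := by
    intro lam
    refine setIntegral_congr_fun measurableSet_Ioi fun x (hx : 0 < x) => ?_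
    simp [Complex.cpow_def_of_ne_zero (Complex.ofReal_ne_zero.mpr hx.ne'),
      ← Complex.ofReal_log hx.le, mul_comm]
  simp_rw [h_mellin]
  exact differentiable_mellin_exp_neg_sub_inv.comp (differentiable_id.add_const 1)
end

section
/- The function Z : ℂ → ℂ defined by Z(λ) = ∫_0^∞ x^λ e^{−x − 1/x} dx satisfies the linear difference equation Z(λ + 2) − (λ + 2)·Z(λ + 1) − Z(λ) = 0 for every λ ∈ ℂ. -/
/-!
Differentiating `x ^ λ e^{-x-1/x}` gives
`λ x^(λ-1) e^{-x-1/x} - x^λ e^{-x-1/x} + x^(λ-2) e^{-x-1/x}`.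
Since `e^{-1/x}` kills every power of `x` at `0⁺` and `e^{-x}` every power at `∞`, the
integrand vanishes at both ends of `(0, ∞)`, so the integral of this derivative is `0`, which is
the difference equation.
-/

open MeasureTheory Set Filter Topology

theorem integral_Ioi_of_hasDerivAt_of_tendsto_nhdsGT {E : Type*} [NormedAddCommGroup E]
    [NormedSpace ℝ E] [CompleteSpace E] {f f' : ℝ → E} {a : ℝ} {l m : E}
    (hderiv : ∀ x ∈ Ioi a, HasDerivAt f (f' x) x) (f'int : IntegrableOn f' (Ioi a))
    (hl : Tendsto f (𝓝[>] a) (𝓝 l)) (hm : Tendsto f atTop (𝓝 m)) :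
    ∫ x in Ioi a, f' x = m - l := by
  classical
  have hIci : Ici a \ {a} = Ioi a := by ext; simp [lt_iff_le_and_ne]
  have hcont : ContinuousWithinAt (Function.update f a l) (Ici a) a := by
    rwa [continuousWithinAt_update_same, hIci]
  have hderiv' : ∀ x ∈ Ioi a, HasDerivAt (Function.update f a l) (f' x) x := fun x hx ↦
    (hderiv x hx).congr_of_eventuallyEq <| by
      filter_upwards [eventually_ne_nhds (ne_of_gt hx)] with y hy
      exact Function.update_of_ne hy _ _
  have hm' : Tendsto (Function.update f a l) atTop (𝓝 m) :=
    hm.congr' <| by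
      filter_upwards [eventually_ne_atTop a] with y hy
      exact (Function.update_of_ne hy _ _).symm
  simpa using integral_Ioi_of_hasDerivAt_of_tendsto hcont hderiv' f'int hm'

theorem exists_natCast_add_pos (r : ℝ) : ∃ n : ℕ, 0 < r + n := by
  obtain ⟨n, hn⟩ := exists_nat_gt (-r)
  exact ⟨n, by linarith⟩

theorem Real.exp_neg_inv_le_factorial_mul_pow (n : ℕ) {x : ℝ} (hx : 0 < x) :
    Real.exp (-x⁻¹) ≤ n.factorial * x ^ n := by
  rw [Real.exp_neg, inv_le_comm₀ (Real.exp_pos _) (by positivity), mul_inv, ← inv_pow,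
    ← div_eq_inv_mul]
  exact Real.pow_div_factorial_le_exp _ (by positivity) n

theorem Complex.exp_sub_natCast_mul_log {x : ℝ} (hx : 0 < x) (s : ℂ) (n : ℕ) :
    Complex.exp ((s - n) * Real.log x) = Complex.exp (s * Real.log x) / (x : ℂ) ^ n := by
  rw [sub_mul, Complex.exp_sub, Complex.exp_nat_mul, ← Complex.ofReal_exp, Real.exp_log hx]

-- At `x = 0` the junk values `log 0 = 0` and `1 / 0 = 0` make this `1` rather than the limit `0`,
-- hence the `𝓝[>]` form of the fundamental theorem of calculus above.
noncomputable def zetaIntegrand (s : ℂ) (x : ℝ) : ℂ :=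
  Complex.exp (s * Real.log x) * Real.exp (-x - 1 / x)

section zetaIntegrand

variable {x : ℝ}

theorem norm_zetaIntegrand {s : ℂ} (hx : 0 < x) :
    ‖zetaIntegrand s x‖ = x ^ s.re * (Real.exp (-x) * Real.exp (-x⁻¹)) := by
  rw [zetaIntegrand, norm_mul, Complex.norm_exp, Complex.norm_real, Real.norm_eq_abs,
    Real.abs_exp, Complex.re_mul_ofReal, Real.rpow_def_of_pos hx, ← Real.exp_add,
    ← Real.exp_add, ← Real.exp_add, one_div]
  ring_nf

theorem norm_zetaIntegrand_le_factorial_mul {s : ℂ} (n : ℕ) (hx : 0 < x) :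
    ‖zetaIntegrand s x‖ ≤ n.factorial * (Real.exp (-x) * x ^ (s.re + n)) := by
  rw [norm_zetaIntegrand hx, Real.rpow_add hx, Real.rpow_natCast]
  calc x ^ s.re * (Real.exp (-x) * Real.exp (-x⁻¹))
      ≤ x ^ s.re * (Real.exp (-x) * (n.factorial * x ^ n)) := by
        gcongr
        exact Real.exp_neg_inv_le_factorial_mul_pow n hx
    _ = n.factorial * (Real.exp (-x) * (x ^ s.re * x ^ n)) := by ring

theorem norm_zetaIntegrand_le_rpow_mul_exp {s : ℂ} (hx : 0 < x) :
    ‖zetaIntegrand s x‖ ≤ x ^ s.re * Real.exp (-1 * x) := by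
  rw [norm_zetaIntegrand hx, neg_one_mul]
  gcongr
  exact mul_le_of_le_one_right (Real.exp_pos _).le
    (Real.exp_le_one_iff.mpr (neg_nonpos.mpr (inv_pos.mpr hx).le))

theorem continuousOn_zetaIntegrand (s : ℂ) : ContinuousOn (zetaIntegrand s) (Ioi 0) := by
  have hx : ∀ x ∈ Ioi (0 : ℝ), x ≠ 0 := fun x hx ↦ ne_of_gt hx
  unfold zetaIntegrand
  fun_prop (disch := assumption)

theorem integrableOn_zetaIntegrand (s : ℂ) : IntegrableOn (zetaIntegrand s) (Ioi 0) := by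
  obtain ⟨n, hn⟩ := exists_natCast_add_pos (s.re + 1)
  have hGamma := (Real.GammaIntegral_convergent hn).const_mul (n.factorial : ℝ)
  rw [show s.re + 1 + n - 1 = s.re + n by ring] at hGamma
  refine hGamma.mono' ((continuousOn_zetaIntegrand s).aestronglyMeasurable measurableSet_Ioi) ?_
  filter_upwards [ae_restrict_mem measurableSet_Ioi] with x hx
  exact norm_zetaIntegrand_le_factorial_mul n hx

theorem tendsto_zetaIntegrand_nhdsGT_zero (s : ℂ) :
    Tendsto (zetaIntegrand s) (𝓝[>] 0) (𝓝 0) := by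
  obtain ⟨n, hn⟩ := exists_natCast_add_pos s.re
  have hpow : Tendsto (fun x : ℝ ↦ (n.factorial : ℝ) * x ^ (s.re + n)) (𝓝[>] 0) (𝓝 0) := by
    simpa [Real.zero_rpow hn.ne'] using
      ((Real.continuousAt_rpow_const 0 _ (Or.inr hn.le)).tendsto.const_mul
        (n.factorial : ℝ)).mono_left nhdsWithin_le_nhds
  refine squeeze_zero_norm' ?_ hpow
  filter_upwards [self_mem_nhdsWithin] with x (hx : 0 < x)
  refine (norm_zetaIntegrand_le_factorial_mul n hx).trans ?_
  gcongr
  exact mul_le_of_le_one_left (by positivity) (Real.exp_le_one_iff.mpr (by linarith))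

theorem tendsto_zetaIntegrand_atTop (s : ℂ) : Tendsto (zetaIntegrand s) atTop (𝓝 0) := by
  refine squeeze_zero_norm' ?_ (tendsto_rpow_mul_exp_neg_mul_atTop_nhds_zero s.re 1 one_pos)
  filter_upwards [eventually_gt_atTop 0] with x hx
  exact norm_zetaIntegrand_le_rpow_mul_exp hx

theorem hasDerivAt_zetaIntegrand (s : ℂ) (hx : 0 < x) :
    HasDerivAt (zetaIntegrand s)
      (s * zetaIntegrand (s - 1) x - zetaIntegrand s x + zetaIntegrand (s - 2) x) x := by
  have hpow : HasDerivAt (fun y : ℝ ↦ Complex.exp (s * Real.log y))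
      (Complex.exp (s * Real.log x) * (s * (x : ℂ)⁻¹)) x := by
    simpa using (((Real.hasDerivAt_log hx.ne').ofReal_comp).const_mul s).cexp
  have hexp : HasDerivAt (fun y : ℝ ↦ ((Real.exp (-y - 1 / y) : ℝ) : ℂ))
      ((Real.exp (-x - 1 / x) * (-1 + (x ^ 2)⁻¹) : ℝ) : ℂ) x := by
    simp only [one_div]
    have hinner := (hasDerivAt_id' x).neg.sub (hasDerivAt_inv hx.ne')
    rw [show -1 - -(x ^ 2)⁻¹ = -1 + (x ^ 2)⁻¹ by ring] at hinner
    exact hinner.exp.ofReal_comp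
  have hsub_one : Complex.exp ((s - 1) * Real.log x) = Complex.exp (s * Real.log x) / x := by
    simpa using Complex.exp_sub_natCast_mul_log hx s 1
  have hsub_two : Complex.exp ((s - 2) * Real.log x) = Complex.exp (s * Real.log x) / x ^ 2 := by
    simpa using Complex.exp_sub_natCast_mul_log hx s 2
  have hx0 : (x : ℂ) ≠ 0 := Complex.ofReal_ne_zero.mpr hx.ne'
  refine (hpow.mul hexp).congr_deriv ?_
  simp only [zetaIntegrand, hsub_one, hsub_two]
  push_cast
  field_simp
  ring

end zetaIntegrand

theorem integral_zetaIntegrand_recurrence (s : ℂ) :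
    s * ∫ x in Ioi 0, zetaIntegrand (s - 1) x
      = (∫ x in Ioi 0, zetaIntegrand s x) - ∫ x in Ioi 0, zetaIntegrand (s - 2) x := by
  have h₁ := (integrableOn_zetaIntegrand (s - 1)).const_mul s
  have h₂ := integrableOn_zetaIntegrand s
  have h₃ := integrableOn_zetaIntegrand (s - 2)
  have hFTC := integral_Ioi_of_hasDerivAt_of_tendsto_nhdsGT
    (fun x hx ↦ hasDerivAt_zetaIntegrand s hx) ((h₁.sub h₂).add h₃)
    (tendsto_zetaIntegrand_nhdsGT_zero s) (tendsto_zetaIntegrand_atTop s)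
  rw [integral_add (f := fun x ↦ s * zetaIntegrand (s - 1) x - zetaIntegrand s x) (h₁.sub h₂) h₃,
    integral_sub h₁ h₂, integral_const_mul, sub_self] at hFTC
  linear_combination hFTC

/-- The local zeta function `Z(λ) = ∫_0^∞ x^λ e^{−x−1/x} dx` satisfies the difference
equation `Z(λ+2) − (λ+2) Z(λ+1) − Z(λ) = 0`. -/
theorem statement16 (Z : ℂ → ℂ)
    (hZ : ∀ lam : ℂ, Z lam =
      ∫ x in Set.Ioi (0 : ℝ),
        Complex.exp (lam * Real.log x) * Real.exp (-x - 1 / x)) :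
    ∀ lam : ℂ, Z (lam + 2) - (lam + 2) * Z (lam + 1) - Z lam = 0 := by
  intro lam
  have hrec := integral_zetaIntegrand_recurrence (lam + 2)
  rw [add_sub_cancel_right, show lam + 2 - 1 = lam + 1 by ring] at hrec
  have hZ' : ∀ s, Z s = ∫ x in Ioi 0, zetaIntegrand s x := hZ
  rw [hZ', hZ', hZ']
  linear_combination -hrec
end
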